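/- The Thue–Morse word t contains neither 01010 nor 10101 as a factor. -/
import Mathlib


/-- The tortoise operation on binary words: if the word contains a 1 (`true`),
delete the first occurrence of 1 and append a 1 at the right end; otherwise do nothing. -/
def tortoise (w : List Bool) : List Bool :=
  if true ∈ w then (w.erase true) ++ [true] else w

/-- `w` is a factor (subword) of the infinite word `x`. -/
def IsFactor (x : ℕ → Bool) (w : List Bool) : Prop :=
  ∃ i, w = (List.range w.length).map (fun t => x (i + t))

/-- The set of length-`n` factors of `x`. -/
def factorSet (x : ℕ → Bool) (n : ℕ) : Set (List Bool) :=
  {w | w.length = n ∧ IsFactor x w}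

/-- The factor complexity of `x`. -/
noncomputable def rho (x : ℕ → Bool) (n : ℕ) : ℕ :=
  (factorSet x n).ncard

/-- The tortoise complexity of `x`: the number of `∼ₜ`-equivalence classes of
length-`n` factors of `x`, i.e. the number of distinct images under `tortoise`. -/
noncomputable def rhoTort (x : ℕ → Bool) (n : ℕ) : ℕ :=
  (tortoise '' factorSet x n).ncard

/-- The `k`-tortoise complexity of `x`: the number of equivalence classes of
length-`n` factors of `x` under `tortoise^[k] w = tortoise^[k] v`. -/
noncomputable def rhoTortK (k : ℕ) (x : ℕ → Bool) (n : ℕ) : ℕ :=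
  ((tortoise^[k]) '' factorSet x n).ncard

/-- `y` is a left special factor of `x`: both `0y` and `1y` are factors of `x`. -/
def LeftSpecial (x : ℕ → Bool) (y : List Bool) : Prop :=
  IsFactor x (false :: y) ∧ IsFactor x (true :: y)

/-- The Thue–Morse sequence: `tm n` is the parity of the number of 1's in the
binary expansion of `n` (`true` = 1). -/
def tm (n : ℕ) : Bool :=
  decide ((Nat.digits 2 n).sum % 2 = 1)

/-- The regular paperfolding sequence, reindexed so that `pf m = f_{m+1}`:
writing `m + 1 = n' * 2^k` with `n'` odd, `pf m = true` iff `n' ≡ 3 (mod 4)`. -/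
def pf (m : ℕ) : Bool :=
  decide ((m + 1) / 2 ^ (padicValNat 2 (m + 1)) % 4 = 3)

lemma tm_two_mul (n : ℕ) : tm (2 * n) = tm n := by
  rcases Nat.eq_zero_or_pos n with h | h
  · subst h; rfl
  · unfold tm
    rw [Nat.digits_def' (by norm_num) (by positivity)]
    simp [Nat.mul_div_cancel_left _ (by norm_num : 0 < 2), Nat.mul_mod_right]

lemma tm_two_mul_add_one (n : ℕ) : tm (2 * n + 1) = !tm n := by
  unfold tm
  rw [Nat.digits_def' (by norm_num) (by omega)]
  have h1 : (2 * n + 1) % 2 = 1 := by omega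
  have h2 : (2 * n + 1) / 2 = n := by omega
  rw [h1, h2]
  rcases Nat.mod_two_eq_zero_or_one (Nat.digits 2 n).sum with h | h <;>
    simp [List.sum_cons, Nat.add_mod, h]

lemma tm_consec (m : ℕ) :
    ¬ (tm (m + 1) = tm m ∧ tm (m + 2) = tm (m + 1)) := by
  rintro ⟨h1, h2⟩
  rcases Nat.even_or_odd m with ⟨p, hp⟩ | ⟨p, hp⟩
  · have hm : m = 2 * p := by omega
    rw [hm] at h1
    rw [tm_two_mul_add_one, tm_two_mul] at h1
    exact (Bool.not_ne_self _ h1).elim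
  · have hm : m + 1 = 2 * (p + 1) := by omega
    have hm2 : m + 2 = 2 * (p + 1) + 1 := by omega
    rw [hm, hm2] at h2
    rw [tm_two_mul_add_one, tm_two_mul] at h2
    exact (Bool.not_ne_self _ h2).elim

lemma no_alt (i : ℕ) (h1 : tm (i + 1) = !tm i) (h2 : tm (i + 2) = !tm (i + 1))
    (h3 : tm (i + 3) = !tm (i + 2)) (h4 : tm (i + 4) = !tm (i + 3)) : False := by
  rcases Nat.even_or_odd i with ⟨m, hm⟩ | ⟨m, hm⟩
  · have e2 : i + 2 = 2 * (m + 1) := by omega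
    have e1 : i + 1 = 2 * m + 1 := by omega
    have e4 : i + 4 = 2 * (m + 2) := by omega
    have e3 : i + 3 = 2 * (m + 1) + 1 := by omega
    rw [e2, e1, tm_two_mul, tm_two_mul_add_one] at h2
    rw [e4, e3, tm_two_mul, tm_two_mul_add_one] at h4
    simp only [Bool.not_not] at h2 h4
    exact tm_consec m ⟨h2, h4⟩
  · have e1 : i + 1 = 2 * (m + 1) := by omega
    have e0 : i = 2 * m + 1 := by omega
    have e3 : i + 3 = 2 * (m + 2) := by omega
    have e2 : i + 2 = 2 * (m + 1) + 1 := by omega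
    rw [e1, tm_two_mul] at h1
    rw [e0, tm_two_mul_add_one] at h1
    rw [e3, e2, tm_two_mul, tm_two_mul_add_one] at h3
    simp only [Bool.not_not] at h1 h3
    exact tm_consec m ⟨h1, h3⟩

/-- the Thue–Morse word contains neither `01010` nor `10101` as a
factor. -/
theorem stmt_12 :
    ¬ IsFactor tm [false, true, false, true, false] ∧
    ¬ IsFactor tm [true, false, true, false, true] := by
  constructor <;> rintro ⟨i, h⟩ <;>
  · simp only [List.length_cons, List.length_nil, List.range_succ, List.map_append,
      List.map_cons, List.map_nil, List.range_zero] at h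
    simp only [List.append_assoc, List.nil_append, List.cons_append,
      List.cons.injEq, and_true] at h
    obtain ⟨a0, a1, a2, a3, a4⟩ := h
    refine no_alt i ?_ ?_ ?_ ?_
    · show tm (i + 1) = !tm (i + 0); rw [← a1, ← a0]; rfl
    · rw [← a2, ← a1]; rfl
    · rw [← a3, ← a2]; rfl
    · rw [← a4, ← a3]; rfl
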